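/- arXiv:1705.04842 — 2 statements merged into one kernel-verified Lean document; each statement's English description precedes it below -/
import Mathlib

section
/- Under the condition K₀^{1/d} ≤ ψ(λ₀)^{−1/d} · κ₀λ₀² / (h₀κ₀ + (λ₀² + h₀²κ₀²)^{1/2}), the paraboloid P(x) = h₀ + αr₀² − α|x − z₀|² with α = λ₀²κ₀ / (2(h₀κ₀ + (λ₀² + h₀²κ₀²)^{1/2})) and κ₀ = 1/r₀ satisfies det D²(−P) = (2α)^d ≥ K₀ ψ(λ₀), i.e. P is a supersolution of the Monge–Ampère inequality det D²(−u) ≥ K₀ ψ(|∇u|) on its positivity set, given that ψ is nondecreasing and |∇P| ≤ λ₀ on {P ≥ 0}. -/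
/-- Under the smallness condition
`K₀^(1/d) ≤ ψ(λ₀)^(-1/d) κ₀ λ₀² / (h₀ κ₀ + √(λ₀² + h₀² κ₀²))`,
the paraboloid with `α = λ₀² κ₀ / (2 (h₀ κ₀ + √(λ₀² + h₀² κ₀²)))` satisfies
`det D²(-P) = (2α)^d ≥ K₀ ψ(λ₀)`, i.e. it is a supersolution of the
Monge–Ampère inequality. -/
theorem paraboloid_supersolution
    (d : ℕ) (hd : 1 ≤ d) (K₀ h₀ lam₀ r₀ κ₀ α : ℝ)
    (hK₀ : 0 < K₀) (hh₀ : 0 < h₀) (hlam₀ : 0 < lam₀) (hr₀ : 0 < r₀)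
    (hκ₀ : κ₀ = 1 / r₀)
    (ψ : ℝ → ℝ) (hψmono : Monotone ψ) (hψpos : ∀ t, 0 < ψ t)
    (hα : α = lam₀ ^ 2 * κ₀ / (2 * (h₀ * κ₀ + Real.sqrt (lam₀ ^ 2 + h₀ ^ 2 * κ₀ ^ 2))))
    (hsmall : K₀ ^ ((1:ℝ)/d) ≤
      (ψ lam₀) ^ (-(1:ℝ)/d) *
        (κ₀ * lam₀ ^ 2 / (h₀ * κ₀ + Real.sqrt (lam₀ ^ 2 + h₀ ^ 2 * κ₀ ^ 2)))) :
    K₀ * ψ lam₀ ≤ (2 * α) ^ d := by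
  have hψ := hψpos lam₀
  have hdpos : (0:ℝ) < d := by exact_mod_cast Nat.lt_of_lt_of_le Nat.zero_lt_one hd
  set D := h₀ * κ₀ + Real.sqrt (lam₀ ^ 2 + h₀ ^ 2 * κ₀ ^ 2) with hD
  have hκpos : 0 < κ₀ := by rw [hκ₀]; positivity
  have hDpos : 0 < D := by
    have : 0 ≤ Real.sqrt (lam₀ ^ 2 + h₀ ^ 2 * κ₀ ^ 2) := Real.sqrt_nonneg _
    nlinarith [mul_pos hh₀ hκpos]
  have h2α : 2 * α = κ₀ * lam₀ ^ 2 / D := by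
    rw [hα]; field_simp
  -- multiply hsmall by ψ^(1/d)
  have hψr : (0:ℝ) < (ψ lam₀) ^ ((1:ℝ)/d) := Real.rpow_pos_of_pos hψ _
  have key : (K₀ * ψ lam₀) ^ ((1:ℝ)/d) ≤ 2 * α := by
    rw [Real.mul_rpow hK₀.le hψ.le, h2α]
    calc K₀ ^ ((1:ℝ)/d) * (ψ lam₀) ^ ((1:ℝ)/d)
        ≤ ((ψ lam₀) ^ (-(1:ℝ)/d) * (κ₀ * lam₀ ^ 2 / D)) * (ψ lam₀) ^ ((1:ℝ)/d) := by
          exact mul_le_mul_of_nonneg_right hsmall hψr.le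
      _ = ((ψ lam₀) ^ (-(1:ℝ)/d) * (ψ lam₀) ^ ((1:ℝ)/d)) * (κ₀ * lam₀ ^ 2 / D) := by ring
      _ = κ₀ * lam₀ ^ 2 / D := by
          have h0 : (-1/(d:ℝ) + 1/d) = 0 := by ring
          rw [← Real.rpow_add hψ, h0, Real.rpow_zero, one_mul]
  have hbase : 0 ≤ (K₀ * ψ lam₀) ^ ((1:ℝ)/d) := (Real.rpow_pos_of_pos (mul_pos hK₀ hψ) _).le
  have := pow_le_pow_left₀ hbase key d
  rwa [← Real.rpow_natCast ((K₀ * ψ lam₀) ^ ((1:ℝ)/d)) d, ← Real.rpow_mul (mul_pos hK₀ hψ).le,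
    one_div_mul_cancel (ne_of_gt hdpos), Real.rpow_one] at this
end

section
/- Let Ω₁ ⊆ Ω₂ be convex domains in ℝ^d and u₁, u₂ concave solutions of the zero-curvature free boundary problem (each equal to h₀ on ∂Ω_i, with Monge–Ampère measure zero and free boundary gradient λ₀), given by the lower-envelope formula u_i = inf of support planes of slope λ₀ to ∂Ω̂_i. Then the convex hull of the free boundary of u₁ is contained in the convex hull of the free boundary of u₂: Hull({u₁ = 0} ∖ Ω₁) ⊆ Hull({u₂ = 0} ∖ Ω₂). -/
open RealInnerProductSpace Set

/-- The lower envelope, over all affine functions of gradient norm `λ₀` lying above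
`h₀` on `Ω`, evaluated at `x`. -/
noncomputable def env {d : ℕ} (h₀ lam₀ : ℝ) (Ω : Set (EuclideanSpace ℝ (Fin d)))
    (x : EuclideanSpace ℝ (Fin d)) : ℝ :=
  sInf {h : ℝ | ∃ (a : EuclideanSpace ℝ (Fin d)) (c : ℝ),
    ‖a‖ = lam₀ ∧ (∀ y ∈ Ω, h₀ ≤ ⟪a, y⟫ + c) ∧ h = ⟪a, x⟫ + c}

/-! Outside a convex set `Ω`, the envelope is `h₀ - λ₀ · dist(x, Ω)`: every admissible plane
is `λ₀`-Lipschitz, and the plane whose gradient points from `x` to its nearest point of `Ω`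
is admissible and attains this value. Hence the free boundary is the level set
`{dist(·, Ω) = h₀ / λ₀}`. A point at distance `r` from `Ω₁` is at distance at most `r` from
`Ω₂ ⊇ Ω₁`, and by the intermediate value theorem along a line through it, it lies between two
points at distance exactly `r` from the bounded set `Ω₂`. -/

open Metric

section InfDist

variable {E : Type*} [NormedAddCommGroup E] [NormedSpace ℝ E]

lemma sub_le_infDist_lineMap {K : Set E} {x y : E} {R : ℝ} (hK : K.Nonempty)
    (hKR : K ⊆ closedBall x R) (c : ℝ) :
    ‖c‖ * dist x y - R ≤ infDist (AffineMap.lineMap x y c) K := by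
  refine (le_infDist hK).2 fun z hz => ?_
  have htri := dist_triangle (AffineMap.lineMap x y c) z x
  rw [dist_lineMap_left] at htri
  linarith [mem_closedBall.1 (hKR hz)]

lemma mem_convexHull_setOf_infDist_eq [Nontrivial E] {K : Set E} (hK : K.Nonempty)
    (hbdd : Bornology.IsBounded K) {x : E} {r : ℝ} (hx : infDist x K ≤ r) :
    x ∈ convexHull ℝ {z | infDist z K = r} := by
  obtain ⟨v, hv⟩ := exists_norm_eq E zero_le_one
  obtain ⟨R, hR⟩ := hbdd.subset_closedBall x
  obtain ⟨z, hz⟩ := hK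
  have hR₀ : 0 ≤ R := dist_nonneg.trans (mem_closedBall.1 (hR hz))
  set L : ℝ →ᵃ[ℝ] E := AffineMap.lineMap x (x + v)
  set f : ℝ → ℝ := fun c => infDist (L c) K
  have hf : Continuous f := (continuous_infDist_pt K).comp AffineMap.lineMap_continuous
  have hf₀ : f 0 = infDist x K := by simp [f, L]
  set T := R + |r|
  have hfar : ∀ c, |c| = T → r ≤ f c := fun c hc => by
    have := sub_le_infDist_lineMap (y := x + v) ⟨z, hz⟩ hR c
    rw [dist_self_add_right, hv, Real.norm_eq_abs, hc] at this
    linarith [le_abs_self r]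
  have hT : 0 ≤ T := add_nonneg hR₀ (abs_nonneg r)
  obtain ⟨p, hp, hfp⟩ := intermediate_value_Icc hT hf.continuousOn
    ⟨hf₀ ▸ hx, hfar T (abs_of_nonneg hT)⟩
  obtain ⟨q, hq, hfq⟩ := intermediate_value_Icc' (neg_nonpos.2 hT) hf.continuousOn
    ⟨hf₀ ▸ hx, hfar (-T) (by rw [abs_neg, abs_of_nonneg hT])⟩
  refine segment_subset_convexHull (x := L q) (y := L p) hfq hfp ?_
  rw [← image_segment, segment_eq_Icc (hq.2.trans hp.1)]
  exact ⟨0, ⟨hq.2, hp.1⟩, AffineMap.lineMap_apply_zero _ _⟩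

variable {F : Type*} [NormedAddCommGroup F] [InnerProductSpace ℝ F] [ProperSpace F]

/-- The unit vector pointing from `x` to its nearest point of `closure Ω`. -/
lemma exists_norm_eq_one_infDist_le_inner {Ω : Set F} (hconv : Convex ℝ Ω) (hne : Ω.Nonempty)
    {x : F} (hpos : 0 < infDist x Ω) :
    ∃ a : F, ‖a‖ = 1 ∧ ∀ y ∈ Ω, infDist x Ω ≤ ⟪a, y - x⟫ := by
  obtain ⟨p, hp, hxp⟩ := exists_mem_closure_infDist_eq_dist hne x
  have hproj : ∀ w ∈ closure Ω, ⟪x - p, w - p⟫ ≤ 0 := by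
    refine (norm_eq_iInf_iff_real_inner_le_zero hconv.closure hp).1 ?_
    rw [← dist_eq_norm, ← hxp, ← infDist_closure, infDist_eq_iInf]
    simp_rw [dist_eq_norm]
  have hnorm : ‖p - x‖ = infDist x Ω := by rw [hxp, dist_comm, dist_eq_norm]
  refine ⟨(infDist x Ω)⁻¹ • (p - x), ?_, fun y hy => ?_⟩
  · rw [norm_smul, hnorm, norm_inv, Real.norm_of_nonneg hpos.le, inv_mul_cancel₀ hpos.ne']
  · rw [real_inner_smul_left, le_inv_mul_iff₀ hpos]
    have hsplit : ⟪p - x, y - x⟫ = ⟪p - x, p - x⟫ + ⟪p - x, y - p⟫ := by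
      rw [← inner_add_right, sub_add_sub_cancel']
    have hflip : ⟪p - x, y - p⟫ = -⟪x - p, y - p⟫ := by rw [← inner_neg_left, neg_sub]
    rw [hsplit, hflip, real_inner_self_eq_norm_sq, hnorm]
    nlinarith [hproj y (subset_closure hy)]

end InfDist
section Envelope

variable {d : ℕ} {h₀ lam₀ : ℝ} {Ω : Set (EuclideanSpace ℝ (Fin d))}
  {x : EuclideanSpace ℝ (Fin d)}

def envValues (h₀ lam₀ : ℝ) (Ω : Set (EuclideanSpace ℝ (Fin d)))
    (x : EuclideanSpace ℝ (Fin d)) : Set ℝ :=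
  {h : ℝ | ∃ (a : EuclideanSpace ℝ (Fin d)) (c : ℝ),
    ‖a‖ = lam₀ ∧ (∀ y ∈ Ω, h₀ ≤ ⟪a, y⟫ + c) ∧ h = ⟪a, x⟫ + c}

lemma env_eq_sInf_envValues : env h₀ lam₀ Ω x = sInf (envValues h₀ lam₀ Ω x) := rfl

lemma envValues_nonempty [Nontrivial (EuclideanSpace ℝ (Fin d))] (hlam : 0 ≤ lam₀)
    (hbdd : Bornology.IsBounded Ω) : (envValues h₀ lam₀ Ω x).Nonempty := by
  obtain ⟨a, ha⟩ := exists_norm_eq (EuclideanSpace ℝ (Fin d)) hlam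
  obtain ⟨R, hR⟩ := hbdd.subset_closedBall 0
  refine ⟨_, a, h₀ + lam₀ * R, ha, fun y hy => ?_, rfl⟩
  have hinner : -(‖a‖ * ‖y‖) ≤ ⟪a, y⟫ := (abs_le.1 (abs_real_inner_le_norm a y)).1
  have hy : ‖y‖ ≤ R := mem_closedBall_zero_iff.1 (hR hy)
  rw [ha] at hinner
  nlinarith

lemma sub_mul_dist_le_of_mem_envValues {h : ℝ} {y : EuclideanSpace ℝ (Fin d)} (hy : y ∈ Ω)
    (hh : h ∈ envValues h₀ lam₀ Ω x) : h₀ - lam₀ * dist x y ≤ h := by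
  obtain ⟨a, c, rfl, hac, rfl⟩ := hh
  have hinner : ⟪a, y - x⟫ ≤ ‖a‖ * ‖y - x‖ := real_inner_le_norm a (y - x)
  rw [inner_sub_right, ← dist_eq_norm, dist_comm] at hinner
  linarith [hac y hy]

lemma envValues_bddBelow (hne : Ω.Nonempty) : BddBelow (envValues h₀ lam₀ Ω x) :=
  let ⟨y, hy⟩ := hne
  ⟨h₀ - lam₀ * dist x y, fun _ hh => sub_mul_dist_le_of_mem_envValues hy hh⟩

lemma sub_mul_infDist_le_env [Nontrivial (EuclideanSpace ℝ (Fin d))] (hlam : 0 < lam₀)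
    (hne : Ω.Nonempty) (hbdd : Bornology.IsBounded Ω) :
    h₀ - lam₀ * infDist x Ω ≤ env h₀ lam₀ Ω x := by
  refine le_csInf (envValues_nonempty hlam.le hbdd) fun h hh => ?_
  have hdist : (h₀ - h) / lam₀ ≤ infDist x Ω := (le_infDist hne).2 fun y hy => by
    rw [div_le_iff₀' hlam]
    linarith [sub_mul_dist_le_of_mem_envValues hy hh]
  rw [div_le_iff₀' hlam] at hdist
  linarith

lemma env_le_sub_mul_infDist (hlam : 0 ≤ lam₀) (hconv : Convex ℝ Ω) (hne : Ω.Nonempty)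
    (hpos : 0 < infDist x Ω) : env h₀ lam₀ Ω x ≤ h₀ - lam₀ * infDist x Ω := by
  obtain ⟨a, ha, hsupp⟩ := exists_norm_eq_one_infDist_le_inner hconv hne hpos
  refine csInf_le (envValues_bddBelow hne)
    ⟨lam₀ • a, h₀ - lam₀ * infDist x Ω - ⟪lam₀ • a, x⟫, ?_, fun y hy => ?_, by ring⟩
  · rw [norm_smul, ha, Real.norm_of_nonneg hlam, mul_one]
  · have hsupp' := mul_le_mul_of_nonneg_left (hsupp y hy) hlam
    rw [inner_sub_right, mul_sub, ← real_inner_smul_left, ← real_inner_smul_left] at hsupp'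
    linarith

lemma env_eq_sub_mul_infDist [Nontrivial (EuclideanSpace ℝ (Fin d))] (hlam : 0 < lam₀)
    (hconv : Convex ℝ Ω) (hne : Ω.Nonempty) (hbdd : Bornology.IsBounded Ω)
    (hpos : 0 < infDist x Ω) : env h₀ lam₀ Ω x = h₀ - lam₀ * infDist x Ω :=
  le_antisymm (env_le_sub_mul_infDist hlam.le hconv hne hpos)
    (sub_mul_infDist_le_env hlam hne hbdd)

lemma setOf_env_eq_zero_diff_eq [Nontrivial (EuclideanSpace ℝ (Fin d))] (hh₀ : 0 < h₀)
    (hlam : 0 < lam₀) (hconv : Convex ℝ Ω) (hne : Ω.Nonempty) (hbdd : Bornology.IsBounded Ω) :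
    {x | env h₀ lam₀ Ω x = 0} \ Ω = {x | infDist x Ω = h₀ / lam₀} := by
  ext x
  constructor
  · rintro ⟨hx : env h₀ lam₀ Ω x = 0, -⟩
    have hlower := sub_mul_infDist_le_env (h₀ := h₀) (x := x) hlam hne hbdd
    have hpos : 0 < infDist x Ω := by
      by_contra! hnpos
      nlinarith
    rw [env_eq_sub_mul_infDist hlam hconv hne hbdd hpos] at hx
    show infDist x Ω = h₀ / lam₀
    rw [eq_div_iff hlam.ne']
    linarith
  · intro (hx : infDist x Ω = h₀ / lam₀)
    have hpos : 0 < infDist x Ω := hx ▸ div_pos hh₀ hlam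
    refine ⟨?_, fun hxΩ => hpos.ne' (infDist_zero_of_mem hxΩ)⟩
    show env h₀ lam₀ Ω x = 0
    rw [env_eq_sub_mul_infDist hlam hconv hne hbdd hpos, hx,
      mul_div_cancel₀ h₀ hlam.ne', sub_self]

end Envelope

/-- Monotonicity of the free boundary with respect to inclusion of the domains:
if `Ω₁ ⊆ Ω₂`, the convex hull of the free boundary of the envelope solution for `Ω₁`
is contained in that for `Ω₂`. -/
theorem free_boundary_monotone
    (d : ℕ) (h₀ lam₀ : ℝ) (hh₀ : 0 < h₀) (hlam₀ : 0 < lam₀)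
    (Ω₁ Ω₂ : Set (EuclideanSpace ℝ (Fin d)))
    (h₁ne : Ω₁.Nonempty) (hconv₁ : Convex ℝ Ω₁) (hconv₂ : Convex ℝ Ω₂)
    (hbdd₂ : Bornology.IsBounded Ω₂) (hsub : Ω₁ ⊆ Ω₂) :
    convexHull ℝ ({x | env h₀ lam₀ Ω₁ x = 0} \ Ω₁) ⊆
      convexHull ℝ ({x | env h₀ lam₀ Ω₂ x = 0} \ Ω₂) := by
  rcases subsingleton_or_nontrivial (EuclideanSpace ℝ (Fin d)) with hE | hE
  · obtain ⟨y, hy⟩ := h₁ne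
    have hempty : {x | env h₀ lam₀ Ω₁ x = 0} \ Ω₁ = ∅ :=
      eq_empty_of_forall_notMem fun x hx => hx.2 (Subsingleton.elim y x ▸ hy)
    rw [hempty, convexHull_empty]
    exact empty_subset _
  have h₂ne : Ω₂.Nonempty := h₁ne.mono hsub
  rw [setOf_env_eq_zero_diff_eq hh₀ hlam₀ hconv₁ h₁ne (hbdd₂.subset hsub),
    setOf_env_eq_zero_diff_eq hh₀ hlam₀ hconv₂ h₂ne hbdd₂]
  refine convexHull_min (fun x (hx : infDist x Ω₁ = h₀ / lam₀) => ?_) (convex_convexHull ℝ _)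
  exact mem_convexHull_setOf_infDist_eq h₂ne hbdd₂ (hx ▸ infDist_le_infDist_of_subset hsub h₁ne)
end
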